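/- For any three-times continuously differentiable functions L_{abc} : ℝ³ → ℝ (indices a,b,c ∈ {1,2,3}) satisfying the antisymmetry L_{abc} = −L_{bac}, the following identity holds at every point of ℝ³: ∂₃∂₃F₁₂₁₂ + ∂₂∂₂F₁₃₁₃ + ∂₁∂₁F₂₃₂₃ − 2∂₁∂₂F₁₃₂₃ − 2∂₂∂₃F₁₂₁₃ + 2∂₁∂₃F₁₂₂₃ = 0, where F_{abcd} := ∂_d L_{abc} − ∂_c L_{abd} + ∂_b L_{cda} − ∂_a L_{cdb}. (This is the cancellation of all third-order derivative terms in the integrability condition I = f_{1212,33} + f_{1313,22} + f_{2323,11} − 2 f_{1323,12} − 2 f_{1213,23} + 2 f_{1223,13} of the 3-dimensional Riemann-Lanczos problem.) -/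

import Mathlib

/-- Partial derivative of `f : ℝ³ → ℝ` with respect to the `i`-th coordinate,
taken as the derivative along the corresponding coordinate line. -/
noncomputable def pd (i : Fin 3) (f : (Fin 3 → ℝ) → ℝ) : (Fin 3 → ℝ) → ℝ :=
  fun x => deriv (fun t => f (Function.update x i t)) (x i)

/-- The flat-space Riemann-Lanczos expression
`F_{abcd} = ∂_d L_{abc} − ∂_c L_{abd} + ∂_b L_{cda} − ∂_a L_{cdb}`. -/
noncomputable def RLF (L : Fin 3 → Fin 3 → Fin 3 → (Fin 3 → ℝ) → ℝ)
    (a b c d : Fin 3) : (Fin 3 → ℝ) → ℝ :=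
  fun x => pd d (L a b c) x - pd c (L a b d) x + pd b (L c d a) x - pd a (L c d b) x

/-!
Expanding `F`, every term of the combination is a third partial derivative
`∂ᵢ∂ⱼ∂ₖ L_{abc}`. For a `C³` function such a derivative depends only on the multiset
`{i, j, k}` (symmetry of second derivatives, applied twice), and once the indices are put
in a normal form the resulting linear combination of derivatives of the `L_{abc}` vanishes
identically.
-/

theorem pd_eq_fderiv {f : (Fin 3 → ℝ) → ℝ} {x : Fin 3 → ℝ} (i : Fin 3)
    (hf : DifferentiableAt ℝ f x) : pd i f x = fderiv ℝ f x (Pi.single i 1) := by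
  have hf' : HasFDerivAt f (fderiv ℝ f x) (Function.update x i (x i)) := by
    rw [Function.update_eq_self]; exact hf.hasFDerivAt
  exact (hf'.comp_hasDerivAt (x i) (hasDerivAt_update x i (x i))).deriv

theorem pd_eq_fderiv_of_differentiable {f : (Fin 3 → ℝ) → ℝ} (i : Fin 3)
    (hf : Differentiable ℝ f) : pd i f = fun x => fderiv ℝ f x (Pi.single i 1) :=
  funext fun x => pd_eq_fderiv i (hf x)

theorem ContDiff.pd {f : (Fin 3 → ℝ) → ℝ} {n : WithTop ℕ∞} (hf : ContDiff ℝ (n + 1) f)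
    (i : Fin 3) : ContDiff ℝ n (pd i f) := by
  rw [pd_eq_fderiv_of_differentiable i (hf.differentiable (by simp))]
  exact (hf.fderiv_right le_rfl).clm_apply contDiff_const

theorem pd_add {f g : (Fin 3 → ℝ) → ℝ} (hf : Differentiable ℝ f) (hg : Differentiable ℝ g)
    (i : Fin 3) : pd i (f + g) = pd i f + pd i g := by
  ext x
  simp only [pd_eq_fderiv i ((hf.add hg) x), pd_eq_fderiv i (hf x), pd_eq_fderiv i (hg x),
    fderiv_add (hf x) (hg x), Pi.add_apply, add_apply]

theorem pd_sub {f g : (Fin 3 → ℝ) → ℝ} (hf : Differentiable ℝ f) (hg : Differentiable ℝ g)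
    (i : Fin 3) : pd i (f - g) = pd i f - pd i g := by
  ext x
  simp only [pd_eq_fderiv i ((hf.sub hg) x), pd_eq_fderiv i (hf x), pd_eq_fderiv i (hg x),
    fderiv_sub (hf x) (hg x), Pi.sub_apply, sub_apply]

theorem pd_sub_add_sub {f g h k : (Fin 3 → ℝ) → ℝ} (hf : Differentiable ℝ f)
    (hg : Differentiable ℝ g) (hh : Differentiable ℝ h) (hk : Differentiable ℝ k) (i : Fin 3) :
    pd i (f - g + h - k) = pd i f - pd i g + pd i h - pd i k := by
  rw [pd_sub ((hf.sub hg).add hh) hk, pd_add (hf.sub hg) hh, pd_sub hf hg]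

theorem pd_comm {f : (Fin 3 → ℝ) → ℝ} (hf : ContDiff ℝ 2 f) (i j : Fin 3) :
    pd i (pd j f) = pd j (pd i f) := by
  have hd : Differentiable ℝ f := hf.differentiable (by norm_num)
  have hf' : ContDiff ℝ 1 (fderiv ℝ f) := hf.fderiv_right (by norm_num)
  have pd_pd_eq : ∀ u v : Fin 3, pd u (pd v f) =
      fun x => fderiv ℝ (fderiv ℝ f) x (Pi.single u 1) (Pi.single v 1) := by
    intro u v
    ext x
    rw [pd_eq_fderiv_of_differentiable v hd,
      pd_eq_fderiv u ((hf'.clm_apply contDiff_const).differentiable one_ne_zero x),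
      fderiv_clm_apply (hf'.differentiable one_ne_zero x) (differentiableAt_const _)]
    simp
  rw [pd_pd_eq, pd_pd_eq]
  ext x
  exact hf.contDiffAt.isSymmSndFDerivAt (by norm_num) _ _

theorem pd_pd_pd_comm_left {f : (Fin 3 → ℝ) → ℝ} (hf : ContDiff ℝ 3 f) (i j k : Fin 3) :
    pd i (pd j (pd k f)) = pd j (pd i (pd k f)) :=
  pd_comm (ContDiff.pd (n := 2) hf k) i j

theorem pd_pd_pd_comm_right {f : (Fin 3 → ℝ) → ℝ} (hf : ContDiff ℝ 3 f) (i j k : Fin 3) :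
    pd i (pd j (pd k f)) = pd i (pd k (pd j f)) := by
  rw [pd_comm (hf.of_le (by norm_num)) j k]

theorem RLF_eq (L : Fin 3 → Fin 3 → Fin 3 → (Fin 3 → ℝ) → ℝ) (a b c d : Fin 3) :
    RLF L a b c d = pd d (L a b c) - pd c (L a b d) + pd b (L c d a) - pd a (L c d b) :=
  rfl

theorem pd_pd_RLF {L : Fin 3 → Fin 3 → Fin 3 → (Fin 3 → ℝ) → ℝ}
    (hC : ∀ a b c, ContDiff ℝ 3 (L a b c)) (i j a b c d : Fin 3) :
    pd i (pd j (RLF L a b c d))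
      = pd i (pd j (pd d (L a b c))) - pd i (pd j (pd c (L a b d)))
        + pd i (pd j (pd b (L c d a))) - pd i (pd j (pd a (L c d b))) := by
  have hd1 : ∀ a b c k, Differentiable ℝ (pd k (L a b c)) := fun a b c k =>
    (ContDiff.pd (n := 2) (hC a b c) k).differentiable (by norm_num)
  have hd2 : ∀ a b c j k, Differentiable ℝ (pd j (pd k (L a b c))) := fun a b c j k =>
    (ContDiff.pd (n := 1) (ContDiff.pd (n := 2) (hC a b c) k) j).differentiable (by norm_num)
  rw [RLF_eq, pd_sub_add_sub (hd1 _ _ _ _) (hd1 _ _ _ _) (hd1 _ _ _ _) (hd1 _ _ _ _),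
    pd_sub_add_sub (hd2 _ _ _ _ _) (hd2 _ _ _ _ _) (hd2 _ _ _ _ _) (hd2 _ _ _ _ _)]

/-- Index `i ∈ {1,2,3}` of the paper corresponds to `i - 1 : Fin 3`. -/
theorem riemann_lanczos_3d_identity_general
    (L : Fin 3 → Fin 3 → Fin 3 → (Fin 3 → ℝ) → ℝ)
    (hC : ∀ a b c, ContDiff ℝ 3 (L a b c)) :
    ∀ x : Fin 3 → ℝ,
      pd 2 (pd 2 (RLF L 0 1 0 1)) x + pd 1 (pd 1 (RLF L 0 2 0 2)) x
        + pd 0 (pd 0 (RLF L 1 2 1 2)) x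
        - 2 * pd 0 (pd 1 (RLF L 0 2 1 2)) x
        - 2 * pd 1 (pd 2 (RLF L 0 1 0 2)) x
        + 2 * pd 0 (pd 2 (RLF L 0 1 1 2)) x = 0 := by
  intro x
  have left := fun a b c => pd_pd_pd_comm_left (hC a b c)
  have right := fun a b c => pd_pd_pd_comm_right (hC a b c)
  -- `left` and `right` are permutation rules, which `simp` applies only when the term order
  -- decreases: they sort the three differentiation indices of every term into a normal form.
  simp only [pd_pd_RLF hC, left, right, Pi.add_apply, Pi.sub_apply]
  ring

/-- All third-order derivative terms cancel in the integrability condition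
`I = f_{1212,33} + f_{1313,22} + f_{2323,11} − 2 f_{1323,12} − 2 f_{1213,23} + 2 f_{1223,13}`
of the 3-dimensional Riemann-Lanczos problem.  Index `i ∈ {1,2,3}` of the paper
corresponds to `i - 1 : Fin 3`. -/
theorem riemann_lanczos_3d_identity
    (L : Fin 3 → Fin 3 → Fin 3 → (Fin 3 → ℝ) → ℝ)
    (hC : ∀ a b c, ContDiff ℝ 3 (L a b c))
    (hA : ∀ a b c x, L a b c x = - L b a c x) :
    ∀ x : Fin 3 → ℝ,
      pd 2 (pd 2 (RLF L 0 1 0 1)) x + pd 1 (pd 1 (RLF L 0 2 0 2)) x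
        + pd 0 (pd 0 (RLF L 1 2 1 2)) x
        - 2 * pd 0 (pd 1 (RLF L 0 2 1 2)) x
        - 2 * pd 1 (pd 2 (RLF L 0 1 0 2)) x
        + 2 * pd 0 (pd 2 (RLF L 0 1 1 2)) x = 0 :=
  riemann_lanczos_3d_identity_general L hC
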